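/- Let κ > 0, r = 2(1+κ), β > 0, k̂ > 0, Σ ≥ 0, and let σ : [k̂, ∞) → [0, ∞) be nonincreasing with σ(k) ≤ Σ for all k ≥ k̂, satisfying σ(k')^{1/r} ≤ (β·k/(k' − k))·σ(k)^{1/2} for all k̂ ≤ k < k'. Set m₀ = 1 + β·Σ^{1/2}·(4β)^{1/κ}·2^{1/κ²} and M₀ = m₀·k̂. Then σ(2M₀) = 0. -/

import Mathlib

/-!
Along the levels `k n = M (2 - 2⁻ⁿ)`, which increase from `M` to `2M` with gaps `M 2⁻ⁿ⁻¹`,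
the quantities `b n = σ (k n) ^ (1 / r)` satisfy `b (n+1) ≤ 4β 2ⁿ b n ^ (1+κ)`. A
superlinear recursion of this kind forces geometric decay `b n ≤ a θⁿ` with `θ = 2^(-1/κ)`
as soon as `b 0` is below the threshold `a = (4β)^(-1/κ) 2^(-1/κ²)`, and the choice of `m₀`
makes the energy bound `σ ≤ Σ` put `b 0` below it. Since `σ (2M)` is dominated by every
`σ (k n)`, it vanishes.
-/

open Set Filter Topology

theorem le_mul_pow_of_superlinear_recursion {b : ℕ → ℝ} {C B κ a θ : ℝ} (hκ : 0 < κ)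
    (hC : 0 ≤ C) (ha : 0 ≤ a) (hθ : 0 ≤ θ) (hb : ∀ n, 0 ≤ b n)
    (hrec : ∀ n, b (n + 1) ≤ C * B ^ n * b n ^ (1 + κ))
    (hBθ : B * θ ^ κ = 1) (hCa : C * a ^ κ ≤ θ) (hb0 : b 0 ≤ a) (n : ℕ) :
    b n ≤ a * θ ^ n := by
  induction n with
  | zero => simpa using hb0
  | succ n ih =>
    have hB : 0 ≤ B := by
      by_contra! hB
      nlinarith [Real.rpow_nonneg hθ κ]
    have hpow : (a * θ ^ n) ^ (1 + κ) = a * θ ^ n * (a ^ κ * (θ ^ κ) ^ n) := by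
      rw [Real.rpow_one_add' (by positivity) (by linarith), Real.mul_rpow ha (by positivity),
        Real.rpow_pow_comm hθ]
    calc b (n + 1) ≤ C * B ^ n * b n ^ (1 + κ) := hrec n
      _ ≤ C * B ^ n * (a * θ ^ n) ^ (1 + κ) := by
        gcongr
        exact hb n
      _ = a * θ ^ n * (C * a ^ κ) * (B * θ ^ κ) ^ n := by rw [hpow, mul_pow]; ring
      _ ≤ a * θ ^ (n + 1) := by
        rw [hBθ, one_pow, mul_one, pow_succ, ← mul_assoc a (θ ^ n) θ]
        exact mul_le_mul_of_nonneg_left hCa (by positivity)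

namespace DeGiorgi

noncomputable def level (M : ℝ) (n : ℕ) : ℝ := M * (2 - 2⁻¹ ^ n)

lemma level_zero (M : ℝ) : level M 0 = M := by
  norm_num [level]

lemma le_level {M : ℝ} (hM : 0 ≤ M) (n : ℕ) : M ≤ level M n := by
  have : (2⁻¹ : ℝ) ^ n ≤ 1 := pow_le_one₀ (by norm_num) (by norm_num)
  unfold level
  nlinarith

lemma level_le_two_mul {M : ℝ} (hM : 0 ≤ M) (n : ℕ) : level M n ≤ 2 * M := by
  have : (0 : ℝ) ≤ 2⁻¹ ^ n := by positivity
  unfold level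
  nlinarith

lemma level_succ_sub (M : ℝ) (n : ℕ) : level M (n + 1) - level M n = M * 2⁻¹ ^ (n + 1) := by
  simp only [level, pow_succ]
  ring

variable {σ : ℝ → ℝ} {κ β khat : ℝ}

lemma rpow_level_succ_le {M : ℝ} (hβ : 0 ≤ β) (hκ : 0 < κ) (hkM : khat ≤ M) (hM : 0 < M)
    (hσ_nonneg : ∀ k, khat ≤ k → 0 ≤ σ k)
    (hiter : ∀ k k' : ℝ, khat ≤ k → k < k' →
      σ k' ^ (1 / (2 * (1 + κ))) ≤ (β * k / (k' - k)) * σ k ^ ((1 : ℝ) / 2)) (n : ℕ) :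
    σ (level M (n + 1)) ^ (1 / (2 * (1 + κ)))
      ≤ 4 * β * 2 ^ n * (σ (level M n) ^ (1 / (2 * (1 + κ)))) ^ (1 + κ) := by
  have hk : khat ≤ level M n := hkM.trans (le_level hM.le n)
  have hgap : 0 < level M (n + 1) - level M n := by rw [level_succ_sub]; positivity
  have hhalf : σ (level M n) ^ ((1 : ℝ) / 2)
      = (σ (level M n) ^ (1 / (2 * (1 + κ)))) ^ (1 + κ) := by
    rw [← Real.rpow_mul (hσ_nonneg _ hk)]
    congr 1
    field_simp
  have hcoef : β * level M n / (level M (n + 1) - level M n) ≤ 4 * β * 2 ^ n := by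
    have h2 : (2 : ℝ) ^ n * 2⁻¹ ^ (n + 1) = 2⁻¹ := by
      rw [pow_succ, ← mul_assoc, ← mul_pow]; norm_num
    rw [div_le_iff₀ hgap, level_succ_sub]
    calc β * level M n ≤ β * (2 * M) := by gcongr; exact level_le_two_mul hM.le n
      _ = 4 * β * 2 ^ n * (M * 2⁻¹ ^ (n + 1)) := by linear_combination (-4 * β * M) * h2
  calc σ (level M (n + 1)) ^ (1 / (2 * (1 + κ)))
      ≤ β * level M n / (level M (n + 1) - level M n) * σ (level M n) ^ ((1 : ℝ) / 2) :=
        hiter _ _ hk (by linarith)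
    _ ≤ 4 * β * 2 ^ n * (σ (level M n) ^ (1 / (2 * (1 + κ)))) ^ (1 + κ) := by
        have := hσ_nonneg _ hk
        rw [hhalf]
        exact mul_le_mul_of_nonneg_right hcoef (by positivity)

lemma rpow_start_le_inv {A Sig M : ℝ} (hκ : 0 < κ) (hβ : 0 < β) (hkhat : 0 < khat) (hA : 0 < A)
    (hSig : 0 ≤ Sig) (hσ_nonneg : ∀ k, khat ≤ k → 0 ≤ σ k) (hσ_le : ∀ k, khat ≤ k → σ k ≤ Sig)
    (hiter : ∀ k k' : ℝ, khat ≤ k → k < k' →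
      σ k' ^ (1 / (2 * (1 + κ))) ≤ (β * k / (k' - k)) * σ k ^ ((1 : ℝ) / 2))
    (hM : M = (1 + β * Sig ^ ((1 : ℝ) / 2) * A) * khat) :
    σ M ^ (1 / (2 * (1 + κ))) ≤ A⁻¹ := by
  rcases hSig.eq_or_lt with rfl | hSig
  · have hMk : M = khat := by simp [hM]
    have : σ M = 0 := le_antisymm (hσ_le M hMk.ge) (hσ_nonneg M hMk.ge)
    rw [this, Real.zero_rpow (by positivity)]
    positivity
  have hgap : M - khat = khat * (β * Sig ^ ((1 : ℝ) / 2) * A) := by rw [hM]; ring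
  have hgap_pos : 0 < M - khat := by rw [hgap]; positivity
  calc σ M ^ (1 / (2 * (1 + κ))) ≤ β * khat / (M - khat) * σ khat ^ ((1 : ℝ) / 2) :=
        hiter khat M le_rfl (by linarith)
    _ ≤ β * khat / (M - khat) * Sig ^ ((1 : ℝ) / 2) := by
        have := hσ_nonneg khat le_rfl
        gcongr
        exact hσ_le khat le_rfl
    _ = A⁻¹ := by
        rw [hgap]
        field_simp

lemma rpow_level_le {M : ℝ} (hκ : 0 < κ) (hβ : 0 < β) (hkM : khat ≤ M) (hM : 0 < M)
    (hσ_nonneg : ∀ k, khat ≤ k → 0 ≤ σ k)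
    (hiter : ∀ k k' : ℝ, khat ≤ k → k < k' →
      σ k' ^ (1 / (2 * (1 + κ))) ≤ (β * k / (k' - k)) * σ k ^ ((1 : ℝ) / 2))
    (h0 : σ M ^ (1 / (2 * (1 + κ))) ≤ ((4 * β) ^ (1 / κ) * 2 ^ (1 / κ ^ 2))⁻¹) (n : ℕ) :
    σ (level M n) ^ (1 / (2 * (1 + κ)))
      ≤ ((4 * β) ^ (1 / κ) * 2 ^ (1 / κ ^ 2))⁻¹ * ((2 : ℝ) ^ (1 / κ))⁻¹ ^ n := by
  refine le_mul_pow_of_superlinear_recursion hκ (C := 4 * β) (B := 2) (by positivity)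
    (by positivity) (by positivity)
    (fun n ↦ Real.rpow_nonneg (hσ_nonneg _ (hkM.trans (le_level hM.le n))) _)
    (rpow_level_succ_le hβ.le hκ hkM hM hσ_nonneg hiter) ?_ ?_ (by rwa [level_zero]) n
  · rw [Real.inv_rpow (by positivity), ← Real.rpow_mul (by norm_num), one_div_mul_cancel hκ.ne',
      Real.rpow_one]
    norm_num
  · rw [Real.inv_rpow (by positivity), Real.mul_rpow (by positivity) (by positivity),
      ← Real.rpow_mul (by positivity), ← Real.rpow_mul (by norm_num), one_div_mul_cancel hκ.ne',
      Real.rpow_one, show 1 / κ ^ 2 * κ = 1 / κ by field_simp, mul_inv,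
      mul_inv_cancel_left₀ (by positivity)]

end DeGiorgi

/-- Stampacchia/De Giorgi iteration lemma for the super-level-set function σ. -/
theorem stmt_7 (κ β khat Sig : ℝ) (hκ : 0 < κ) (hβ : 0 < β) (hkhat : 0 < khat)
    (hSig : 0 ≤ Sig) (r : ℝ) (hr : r = 2 * (1 + κ))
    (σ : ℝ → ℝ)
    (hσ_nonneg : ∀ k, khat ≤ k → 0 ≤ σ k)
    (hσ_anti : AntitoneOn σ (Ici khat))
    (hσ_le : ∀ k, khat ≤ k → σ k ≤ Sig)
    (hiter : ∀ k k' : ℝ, khat ≤ k → k < k' →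
      (σ k') ^ (1 / r) ≤ (β * k / (k' - k)) * (σ k) ^ ((1 : ℝ) / 2))
    (m₀ M₀ : ℝ)
    (hm₀ : m₀ = 1 + β * Sig ^ ((1 : ℝ) / 2) * (4 * β) ^ (1 / κ) * 2 ^ (1 / κ ^ 2))
    (hM₀ : M₀ = m₀ * khat) :
    σ (2 * M₀) = 0 := by
  subst hr hm₀ hM₀
  set A := (4 * β) ^ (1 / κ) * (2 : ℝ) ^ (1 / κ ^ 2)
  set M := (1 + β * Sig ^ ((1 : ℝ) / 2) * (4 * β) ^ (1 / κ) * 2 ^ (1 / κ ^ 2)) * khat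
  have hkM : khat ≤ M := le_mul_of_one_le_left hkhat.le (le_add_of_nonneg_right (by positivity))
  have hM : 0 < M := hkhat.trans_le hkM
  have h2M : khat ≤ 2 * M := by linarith
  have hdecay := DeGiorgi.rpow_level_le hκ hβ hkM hM hσ_nonneg hiter
    (DeGiorgi.rpow_start_le_inv hκ hβ hkhat (by positivity) hSig hσ_nonneg hσ_le hiter (by ring))
  have hθ : ((2 : ℝ) ^ (1 / κ))⁻¹ < 1 :=
    inv_lt_one_of_one_lt₀ (Real.one_lt_rpow one_lt_two (by positivity))
  have hlim : Tendsto (fun n : ℕ ↦ A⁻¹ * ((2 : ℝ) ^ (1 / κ))⁻¹ ^ n) atTop (𝓝 0) := by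
    simpa using (tendsto_pow_atTop_nhds_zero_of_lt_one (by positivity) hθ).const_mul A⁻¹
  have hle : σ (2 * M) ^ (1 / (2 * (1 + κ))) ≤ 0 := ge_of_tendsto' hlim fun n ↦
    (Real.rpow_le_rpow (hσ_nonneg _ h2M)
      (hσ_anti (hkM.trans (DeGiorgi.le_level hM.le n)) h2M (DeGiorgi.level_le_two_mul hM.le n))
      (by positivity)).trans (hdecay n)
  exact (Real.rpow_eq_zero (hσ_nonneg _ h2M) (by positivity)).mp
    (hle.antisymm (Real.rpow_nonneg (hσ_nonneg _ h2M) _))
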